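/- For every H ∈ (0,1), every t ∈ (0,1] and every integer j ≥ 0 with k̂_{t,j} ≥ 1, the Haar coefficient of f_t^{(1)} at n = 2^j + k̂_{t,j} − 1 satisfies ⟨f_t^{(1)}, ℋ_n⟩² ≤ 2^{−2jH} (H + 1/2)^{−2}. -/

import Mathlib

open MeasureTheory ProbabilityTheory Real Filter

noncomputable section

/-- The mother Haar wavelet: 1 on [0,1/2), -1 on [1/2,1], 0 otherwise. -/
def haarMother (s : ℝ) : ℝ :=
  if s ∈ Set.Ico (0 : ℝ) (1/2) then 1 else if s ∈ Set.Icc (1/2 : ℝ) 1 then -1 else 0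

/-- The Haar orthonormal basis of L²[0,1]: `haarFun 0 = 1` on `[0,1]`, and for
`n = 2^j + k` with `0 ≤ k < 2^j`, `haarFun n s = 2^(j/2) * haarMother (2^j * s - k)`. -/
def haarFun (n : ℕ) (s : ℝ) : ℝ :=
  if n = 0 then (if s ∈ Set.Icc (0 : ℝ) 1 then 1 else 0)
  else (2 : ℝ) ^ ((Nat.log2 n : ℝ) / 2) *
    haarMother ((2 : ℝ) ^ (Nat.log2 n : ℕ) * s - ((n - 2 ^ Nat.log2 n : ℕ) : ℝ))

/-- Inner product on L²[0,1]. -/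
def innerUnit (f g : ℝ → ℝ) : ℝ := ∫ s in (0 : ℝ)..1, f s * g s

/-- Inner product on L²[-1,0]. -/
def innerNeg (f g : ℝ → ℝ) : ℝ := ∫ s in (-1 : ℝ)..0, f s * g s

/-- The Haar orthonormal basis of L²[-1,0]. -/
def haarFunNeg (n : ℕ) (s : ℝ) : ℝ := haarFun n (s + 1)

/-- `f_t^{(1)}(s) = (t-s)^(H-1/2)` for `s ∈ [0,t)`, `0` otherwise. -/
def f1 (H t : ℝ) (s : ℝ) : ℝ := if 0 ≤ s ∧ s < t then (t - s) ^ (H - 1/2) else 0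

/-- `f_t^{(2)}(s) = (t-s)^(H-1/2) - (-s)^(H-1/2)` for `s ∈ [-1,0)`, `0` otherwise. -/
def f2 (H t : ℝ) (s : ℝ) : ℝ :=
  if -1 ≤ s ∧ s < 0 then (t - s) ^ (H - 1/2) - (-s) ^ (H - 1/2) else 0

/-- Haar coefficient `⟨f_t^{(1)}, ℋ_n⟩`. -/
def coeff1 (H t : ℝ) (n : ℕ) : ℝ := innerUnit (f1 H t) (haarFun n)

/-- Haar coefficient `⟨f_t^{(2)}, ℋ̃_n⟩`. -/
def coeff2 (H t : ℝ) (n : ℕ) : ℝ := innerNeg (f2 H t) (haarFunNeg n)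

/-- `g_n(t,H) = ∫₀¹ ((t + 1/x)^(H-3/2) - (1/x)^(H-3/2)) x⁻³ (∫₀ˣ ℋ_n(y) dy) dx`. -/
def gCoeff (H t : ℝ) (n : ℕ) : ℝ :=
  ∫ x in (0 : ℝ)..1,
    ((t + x⁻¹) ^ (H - 3/2) - (x⁻¹) ^ (H - 3/2)) * (x⁻¹) ^ (3 : ℕ) *
      (∫ y in (0 : ℝ)..x, haarFun n y)

/-- `C_H = 1/Γ(H + 1/2)`. -/
def CH (H : ℝ) : ℝ := 1 / Real.Gamma (H + 1/2)

/-!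
For `n = 2^j + k` the Haar function is supported on `[k/2^j, (k+1)/2^j]`, which lies in `[0, t]`
when `k = k̂ - 1`. There `f_t^{(1)}` is the power `(t - s)^(H - 1/2)`, so the coefficient is
`2^(j/2) / p` times the second difference `(u + 2h)^p - 2 (u + h)^p + u^p`, where `p = H + 1/2`,
`h = 2^(-j-1)` and `u = t - (k+1)/2^j`. For `0 ≤ p ≤ 2` this second difference is bounded by
`(2h)^p` in absolute value: by subadditivity of `x ↦ x^p` when `p ≤ 1`; when `1 ≤ p` it is
nonnegative by convexity, and at most `2 h^p` by concavity and subadditivity of `x ↦ x^(p/2)`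
applied to the squares, since `((u + 2h)^2 + u^2) / 2 = (u + h)^2 + h^2`.
-/

open Set intervalIntegral

lemma haarMother_of_neg {x : ℝ} (hx : x < 0) : haarMother x = 0 := by
  simp only [haarMother, mem_Ico, mem_Icc]
  rw [if_neg (by intro h; linarith [h.1]), if_neg (by intro h; linarith [h.1])]

lemma haarMother_of_one_lt {x : ℝ} (hx : 1 < x) : haarMother x = 0 := by
  simp only [haarMother, mem_Ico, mem_Icc]
  rw [if_neg (by intro h; linarith [h.2]), if_neg (by intro h; linarith [h.2])]

lemma haarMother_of_mem_Ico {x : ℝ} (hx : x ∈ Ico (0 : ℝ) (1/2)) : haarMother x = 1 :=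
  if_pos hx

lemma haarMother_of_mem_Icc {x : ℝ} (hx : x ∈ Icc (1/2 : ℝ) 1) : haarMother x = -1 := by
  rw [haarMother, if_neg (fun h => by linarith [h.2, hx.1]), if_pos hx]

lemma haarFun_two_pow_add {j k : ℕ} (hk : k < 2 ^ j) (s : ℝ) :
    haarFun (2 ^ j + k) s = 2 ^ ((j : ℝ) / 2) * haarMother (2 ^ j * s - k) := by
  have hlog : Nat.log2 (2 ^ j + k) = j := by
    rw [Nat.log2_eq_log_two]
    exact Nat.log_eq_of_pow_le_of_lt_pow (by omega) (by rw [pow_succ]; omega)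
  rw [haarFun, if_neg (by positivity), hlog, Nat.add_sub_cancel_left]

lemma integral_mul_haarFun {f : ℝ → ℝ} {j k : ℕ} (hk : k < 2 ^ j)
    (hf : IntervalIntegrable f volume (k / 2 ^ j) ((k + 1) / 2 ^ j)) :
    ∫ s in (0 : ℝ)..1, f s * haarFun (2 ^ j + k) s =
      2 ^ ((j : ℝ) / 2) * ((∫ s in (k / 2 ^ j : ℝ)..((k + 1/2) / 2 ^ j), f s) -
        ∫ s in ((k + 1/2) / 2 ^ j : ℝ)..((k + 1) / 2 ^ j), f s) := by
  set a : ℝ := k / 2 ^ j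
  set m : ℝ := (k + 1/2) / 2 ^ j
  set b : ℝ := (k + 1) / 2 ^ j
  set c : ℝ := 2 ^ ((j : ℝ) / 2)
  set F : ℝ → ℝ := fun s => f s * haarFun (2 ^ j + k) s
  have h2j : (0 : ℝ) < 2 ^ j := by positivity
  have hkj : (k : ℝ) + 1 ≤ 2 ^ j := by exact_mod_cast hk
  have ha : 0 ≤ a := by positivity
  have ham : a ≤ m := div_le_div_of_nonneg_right (by linarith) h2j.le
  have hmb : m ≤ b := div_le_div_of_nonneg_right (by linarith) h2j.le
  have hb : b ≤ 1 := (div_le_one h2j).2 hkj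
  have hlt {x y : ℝ} (hxy : x < y) : 2 ^ j * x - k < 2 ^ j * y - k := by gcongr
  have hφa : (2 : ℝ) ^ j * a - k = 0 := by simp only [a]; field_simp; ring
  have hφm : (2 : ℝ) ^ j * m - k = 1/2 := by simp only [m]; field_simp; ring
  have hφb : (2 : ℝ) ^ j * b - k = 1 := by simp only [b]; field_simp; ring
  have hF : ∀ s, F s = f s * (c * haarMother (2 ^ j * s - k)) := fun s =>
    congrArg (f s * ·) (haarFun_two_pow_add hk s)
  have E₁ : EqOn F 0 (Ioo 0 a) := fun s hs => by
    simp [hF, haarMother_of_neg (hφa ▸ hlt hs.2)]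
  have E₂ : EqOn F (fun s => c * f s) (Ioo a m) := fun s hs => by
    simp only [hF, haarMother_of_mem_Ico ⟨(hφa ▸ hlt hs.1).le, hφm ▸ hlt hs.2⟩]; ring
  have E₃ : EqOn F (fun s => -(c * f s)) (Ioo m b) := fun s hs => by
    simp only [hF, haarMother_of_mem_Icc ⟨(hφm ▸ hlt hs.1).le, (hφb ▸ hlt hs.2).le⟩]; ring
  have E₄ : EqOn F 0 (Ioo b 1) := fun s hs => by
    simp [hF, haarMother_of_one_lt (hφb ▸ hlt hs.1)]
  have hfam : IntervalIntegrable f volume a m := hf.mono_set (uIcc_subset_uIcc_left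
    (by rw [uIcc_of_le (ham.trans hmb)]; exact ⟨ham, hmb⟩))
  have hfmb : IntervalIntegrable f volume m b := hf.mono_set (uIcc_subset_uIcc_right
    (by rw [uIcc_of_le (ham.trans hmb)]; exact ⟨ham, hmb⟩))
  have i₁ : IntervalIntegrable F volume 0 a :=
    intervalIntegrable_const.congr_uIoo (uIoo_of_le ha ▸ E₁.symm)
  have i₂ : IntervalIntegrable F volume a m :=
    (hfam.const_mul c).congr_uIoo (uIoo_of_le ham ▸ E₂.symm)
  have i₃ : IntervalIntegrable F volume m b :=
    (hfmb.const_mul c).neg.congr_uIoo (uIoo_of_le hmb ▸ E₃.symm)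
  have i₄ : IntervalIntegrable F volume b 1 :=
    intervalIntegrable_const.congr_uIoo (uIoo_of_le hb ▸ E₄.symm)
  rw [← integral_add_adjacent_intervals (i₁.trans (i₂.trans i₃)) i₄,
    ← integral_add_adjacent_intervals i₁ (i₂.trans i₃),
    ← integral_add_adjacent_intervals i₂ i₃,
    integral_congr_Ioo_of_le ha E₁, integral_congr_Ioo_of_le ham E₂,
    integral_congr_Ioo_of_le hmb E₃, integral_congr_Ioo_of_le hb E₄]
  simp only [Pi.zero_apply, intervalIntegral.integral_zero, intervalIntegral.integral_neg,
    intervalIntegral.integral_const_mul]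
  ring

lemma integral_sub_rpow {q : ℝ} (hq : -1 < q) (t x y : ℝ) :
    ∫ s in x..y, (t - s) ^ q = ((t - x) ^ (q + 1) - (t - y) ^ (q + 1)) / (q + 1) := by
  rw [integral_comp_sub_left (fun z => z ^ q) t, integral_rpow (Or.inl hq)]

lemma f1_eqOn {H t x y : ℝ} (hx : 0 ≤ x) (hyt : y ≤ t) :
    EqOn (f1 H t) (fun s => (t - s) ^ (H - 1/2)) (Ioo x y) := fun _ hs =>
  if_pos ⟨hx.trans hs.1.le, hs.2.trans_le hyt⟩

lemma intervalIntegrable_f1 {H t x y : ℝ} (hH : 0 < H) (hx : 0 ≤ x) (hxy : x ≤ y)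
    (hyt : y ≤ t) :
    IntervalIntegrable (f1 H t) volume x y := by
  refine IntervalIntegrable.congr_uIoo ?_ (uIoo_of_le hxy ▸ (f1_eqOn hx hyt).symm)
  simpa using (intervalIntegrable_rpow' (a := t - x) (b := t - y)
    (by linarith : -1 < H - 1/2)).comp_sub_left t

lemma integral_f1 {H t x y : ℝ} (hH : 0 < H) (hx : 0 ≤ x) (hxy : x ≤ y) (hyt : y ≤ t) :
    ∫ s in x..y, f1 H t s = ((t - x) ^ (H + 1/2) - (t - y) ^ (H + 1/2)) / (H + 1/2) := by
  rw [integral_congr_Ioo_of_le hxy (f1_eqOn hx hyt), integral_sub_rpow (by linarith),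
    show H - 1/2 + 1 = H + 1/2 by ring]

lemma abs_rpow_second_diff_le_of_le_one {p u h : ℝ} (hp0 : 0 ≤ p) (hp1 : p ≤ 1) (hu : 0 ≤ u)
    (hh : 0 ≤ h) : |(u + 2 * h) ^ p - 2 * (u + h) ^ p + u ^ p| ≤ h ^ p := by
  have h₁ : u ^ p ≤ (u + h) ^ p := rpow_le_rpow hu (by linarith) hp0
  have h₂ : (u + h) ^ p ≤ (u + 2 * h) ^ p := rpow_le_rpow (by linarith) (by linarith) hp0
  have h₃ : (u + h) ^ p ≤ u ^ p + h ^ p := rpow_add_le_add_rpow hu hh hp0 hp1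
  have h₄ : (u + 2 * h) ^ p ≤ (u + h) ^ p + h ^ p := by
    rw [show u + 2 * h = u + h + h by ring]
    exact rpow_add_le_add_rpow (by linarith) hh hp0 hp1
  rw [abs_le]
  constructor <;> linarith

lemma rpow_second_diff_mem_Icc_of_one_le {p u h : ℝ} (hp1 : 1 ≤ p) (hp2 : p ≤ 2)
    (hu : 0 ≤ u) (hh : 0 ≤ h) :
    (u + 2 * h) ^ p - 2 * (u + h) ^ p + u ^ p ∈ Icc 0 (2 * h ^ p) := by
  have hsq {x : ℝ} (hx : 0 ≤ x) : (x ^ 2) ^ (p / 2) = x ^ p := by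
    rw [← rpow_natCast, ← rpow_mul hx]; congr 1; push_cast; ring
  have hconvex := (convexOn_rpow hp1).2 (mem_Ici.2 hu) (mem_Ici.2 (by linarith : 0 ≤ u + 2 * h))
    (by norm_num : (0 : ℝ) ≤ 1/2) (by norm_num : (0 : ℝ) ≤ 1/2) (by norm_num)
  have hconcave := (concaveOn_rpow (by linarith : 0 ≤ p / 2) (by linarith : p / 2 ≤ 1)).2
    (mem_Ici.2 (sq_nonneg (u + 2 * h))) (mem_Ici.2 (sq_nonneg u))
    (by norm_num : (0 : ℝ) ≤ 1/2) (by norm_num : (0 : ℝ) ≤ 1/2) (by norm_num)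
  have hsub := rpow_add_le_add_rpow (sq_nonneg (u + h)) (sq_nonneg h)
    (by linarith : 0 ≤ p / 2) (by linarith : p / 2 ≤ 1)
  simp only [smul_eq_mul] at hconvex hconcave
  rw [show 1/2 * u + 1/2 * (u + 2 * h) = u + h by ring] at hconvex
  rw [show 1/2 * (u + 2 * h) ^ 2 + 1/2 * u ^ 2 = (u + h) ^ 2 + h ^ 2 by ring,
    hsq (by linarith), hsq hu] at hconcave
  rw [hsq (by linarith), hsq hh] at hsub
  constructor <;> linarith

lemma abs_rpow_second_diff_le {p u h : ℝ} (hp0 : 0 ≤ p) (hp2 : p ≤ 2) (hu : 0 ≤ u)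
    (hh : 0 ≤ h) :
    |(u + 2 * h) ^ p - 2 * (u + h) ^ p + u ^ p| ≤ (2 * h) ^ p := by
  have hmono : h ^ p ≤ (2 * h) ^ p := rpow_le_rpow hh (by linarith) hp0
  rcases le_total p 1 with hp1 | hp1
  · exact (abs_rpow_second_diff_le_of_le_one hp0 hp1 hu hh).trans hmono
  · obtain ⟨hlow, hupp⟩ := rpow_second_diff_mem_Icc_of_one_le hp1 hp2 hu hh
    have h2 : (2 : ℝ) ≤ 2 ^ p := by simpa using rpow_le_rpow_of_exponent_le one_le_two hp1
    rw [abs_of_nonneg hlow, mul_rpow zero_le_two hh]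
    nlinarith [rpow_nonneg hh p]

lemma coeff1_two_pow_add {H t : ℝ} (hH : 0 < H) {j k : ℕ} (hk : k < 2 ^ j)
    (hkt : (k + 1) / 2 ^ j ≤ t) :
    coeff1 H t (2 ^ j + k) = 2 ^ ((j : ℝ) / 2) / (H + 1/2) *
      ((t - (k + 1) / 2 ^ j + 2 * (1 / 2 ^ (j + 1))) ^ (H + 1/2)
        - 2 * (t - (k + 1) / 2 ^ j + 1 / 2 ^ (j + 1)) ^ (H + 1/2)
        + (t - (k + 1) / 2 ^ j) ^ (H + 1/2)) := by
  have h2j : (0 : ℝ) < 2 ^ j := by positivity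
  have ha : (0 : ℝ) ≤ k / 2 ^ j := by positivity
  have ham : (k : ℝ) / 2 ^ j ≤ (k + 1/2) / 2 ^ j :=
    div_le_div_of_nonneg_right (by linarith) h2j.le
  have hmb : ((k : ℝ) + 1/2) / 2 ^ j ≤ (k + 1) / 2 ^ j :=
    div_le_div_of_nonneg_right (by linarith) h2j.le
  rw [coeff1, innerUnit, integral_mul_haarFun hk (intervalIntegrable_f1 hH ha (ham.trans hmb) hkt),
    integral_f1 hH ha ham (hmb.trans hkt), integral_f1 hH (ha.trans ham) hmb hkt]
  have e₁ : t - k / 2 ^ j = t - (k + 1) / 2 ^ j + 2 * (1 / 2 ^ (j + 1)) := by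
    field_simp; ring
  have e₂ : t - (k + 1/2) / 2 ^ j = t - (k + 1) / 2 ^ j + 1 / 2 ^ (j + 1) := by
    field_simp; ring
  rw [e₁, e₂]
  ring

lemma abs_coeff1_two_pow_add_le {H t : ℝ} (hH0 : 0 < H) (hH : H ≤ 3/2) {j k : ℕ}
    (hk : k < 2 ^ j) (hkt : (k + 1) / 2 ^ j ≤ t) :
    |coeff1 H t (2 ^ j + k)| ≤ 2 ^ (-((j : ℝ) * H)) / (H + 1/2) := by
  have hp : 0 < H + 1/2 := by linarith
  have hkt' : (0 : ℝ) ≤ t - (k + 1) / 2 ^ j := sub_nonneg.2 hkt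
  have hΔ := abs_rpow_second_diff_le hp.le (by linarith) hkt'
    (by positivity : (0 : ℝ) ≤ 1 / 2 ^ (j + 1))
  have h2h : 2 * (1 / 2 ^ (j + 1) : ℝ) = 2 ^ (-(j : ℝ)) := by
    rw [rpow_neg zero_le_two, rpow_natCast, pow_succ]; field_simp
  calc |coeff1 H t (2 ^ j + k)|
      ≤ 2 ^ ((j : ℝ) / 2) / (H + 1/2) * 2 ^ (-(j : ℝ) * (H + 1/2)) := by
        rw [coeff1_two_pow_add hH0 hk hkt, abs_mul, abs_of_pos (by positivity)]
        gcongr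
        exact hΔ.trans_eq (by rw [h2h, ← rpow_mul zero_le_two])
    _ = 2 ^ (-((j : ℝ) * H)) / (H + 1/2) := by
        rw [div_mul_eq_mul_div, ← rpow_add zero_lt_two]
        ring_nf

theorem stmt10_general (H : ℝ) (hH : H ∈ Set.Ioo (0 : ℝ) 1) (t : ℝ)
    (j khat : ℕ) (hkhat : khat < 2 ^ j) (hk1 : 1 ≤ khat)
    (hmem : (khat : ℝ) / 2 ^ j ≤ t ∧ (t < ((khat : ℝ) + 1) / 2 ^ j ∨ khat + 1 = 2 ^ j)) :
    (coeff1 H t (2 ^ j + khat - 1)) ^ 2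
      ≤ (2 : ℝ) ^ (-(2 * (j : ℝ) * H)) / (H + 1/2) ^ 2 := by
  obtain ⟨k, rfl⟩ : ∃ k, khat = k + 1 := ⟨khat - 1, by omega⟩
  rw [show 2 ^ j + (k + 1) - 1 = 2 ^ j + k by omega]
  have hbound := abs_coeff1_two_pow_add_le hH.1 (by linarith [hH.2]) (by omega)
    (by exact_mod_cast hmem.1 : ((k : ℝ) + 1) / 2 ^ j ≤ t)
  calc coeff1 H t (2 ^ j + k) ^ 2
      = |coeff1 H t (2 ^ j + k)| ^ 2 := (sq_abs _).symm
    _ ≤ (2 ^ (-((j : ℝ) * H)) / (H + 1/2)) ^ 2 := pow_le_pow_left₀ (abs_nonneg _) hbound 2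
    _ = (2 : ℝ) ^ (-(2 * (j : ℝ) * H)) / (H + 1/2) ^ 2 := by
        rw [div_pow, ← rpow_natCast, ← rpow_mul zero_le_two]
        ring_nf

/-- bound on the Haar coefficient of `f_t^{(1)}` at `n = 2^j + k̂_{t,j} - 1`. -/
theorem stmt10 (H : ℝ) (hH : H ∈ Set.Ioo (0 : ℝ) 1) (t : ℝ) (ht : t ∈ Set.Ioc (0 : ℝ) 1)
    (j khat : ℕ) (hkhat : khat < 2 ^ j) (hk1 : 1 ≤ khat)
    (hmem : (khat : ℝ) / 2 ^ j ≤ t ∧ (t < ((khat : ℝ) + 1) / 2 ^ j ∨ khat + 1 = 2 ^ j)) :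
    (coeff1 H t (2 ^ j + khat - 1)) ^ 2
      ≤ (2 : ℝ) ^ (-(2 * (j : ℝ) * H)) / (H + 1/2) ^ 2 :=
  stmt10_general H hH t j khat hkhat hk1 hmem
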